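/- As α tends to 0 from the right, the exponentiated PML bound B_thm(α) := max_{I ⊆ Fin m} exp(−(min_j c_j^I)/b) / (α ∑_j exp(−c_j^I/b) + (1 − kα) exp(−(max_j c_j^I)/b)) tends to exp(ε_DP), where ε_DP := (max_{j1,j2 ∈ Fin k} ∑_l |w_{l,j1} − w_{l,j2}|)/b; i.e., the context-aware bound converges to the standard differential-privacy guarantee as the prior assumption vanishes. -/

import Mathlib

open Finset Real Filter

noncomputable section

/-- Signed column sum `c_j^I := ∑_{l ∈ I} w_{l,j} − ∑_{l ∉ I} w_{l,j}`. -/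
def signedColSum {m k : ℕ} (W : Fin m → Fin k → ℝ) (I : Finset (Fin m)) (j : Fin k) : ℝ :=
  (∑ l ∈ I, W l j) - ∑ l ∈ Iᶜ, W l j

/-- The exponentiated PML bound `B_thm(α)`. -/
def Bthm {m k : ℕ} (W : Fin m → Fin k → ℝ) (b α : ℝ) : ℝ :=
  ⨆ I : Finset (Fin m),
    Real.exp (-(⨅ j, signedColSum W I j) / b) /
      (α * (∑ j, Real.exp (-(signedColSum W I j) / b)) +
        (1 - (k : ℝ) * α) * Real.exp (-(⨆ j, signedColSum W I j) / b))

/-- The DP parameter of the Laplace mechanism with scale `b` on workload `W`. -/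
def εDP {m k : ℕ} (W : Fin m → Fin k → ℝ) (b : ℝ) : ℝ :=
  (⨆ j1 : Fin k, ⨆ j2 : Fin k, ∑ l, |W l j1 - W l j2|) / b

/-! At `α = 0` every denominator in `B_thm` is a positive exponential, so `B_thm` is continuous
there and the limit is `B_thm(0) = max_I exp((max_j c_j^I - min_j c_j^I) / b)`. Writing
`max - min` as `max_{j1,j2} (c_{j1}^I - c_{j2}^I)` and exchanging the maxima, it remains to see
that `max_I (c_{j1}^I - c_{j2}^I) = ∑_l |w_{l,j1} - w_{l,j2}|`: the bound is the triangle
inequality, and it is attained at `I = {l | w_{l,j2} ≤ w_{l,j1}}`. -/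

section Order

variable {α ι κ : Type*}

lemma ciSup_comm_of_finite [ConditionallyCompleteLattice α] [Finite ι] [Nonempty ι]
    [Finite κ] [Nonempty κ] (f : ι → κ → α) :
    ⨆ i, ⨆ j, f i j = ⨆ j, ⨆ i, f i j := by
  refine le_antisymm (ciSup_le fun i => ciSup_le fun j => ?_)
    (ciSup_le fun j => ciSup_le fun i => ?_)
  · exact (le_ciSup (Finite.bddAbove_range (f · j)) i).trans
      (le_ciSup (Finite.bddAbove_range fun j => ⨆ i, f i j) j)
  · exact (le_ciSup (Finite.bddAbove_range (f i)) j).trans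
      (le_ciSup (Finite.bddAbove_range fun i => ⨆ j, f i j) i)

variable [ConditionallyCompleteLinearOrder α] [AddCommGroup α] [IsOrderedAddMonoid α]

lemma ciSup_sub_ciInf_eq_ciSup_ciSup_sub [Finite ι] [Nonempty ι] (g : ι → α) :
    (⨆ i, g i) - ⨅ i, g i = ⨆ i, ⨆ j, (g i - g j) := by
  refine le_antisymm ?_ (ciSup_le fun i => ciSup_le fun j =>
    sub_le_sub (le_ciSup (Finite.bddAbove_range g) i) (ciInf_le (Finite.bddBelow_range g) j))
  obtain ⟨i, hi⟩ := exists_eq_ciSup_of_finite (f := g)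
  obtain ⟨j, hj⟩ := exists_eq_ciInf_of_finite (f := g)
  rw [← hi, ← hj]
  exact (le_ciSup (Finite.bddAbove_range (g i - g ·)) j).trans
    (le_ciSup (Finite.bddAbove_range fun i => ⨆ j, (g i - g j)) i)

variable [Fintype ι] [DecidableEq ι]

lemma sum_sub_sum_compl_le_sum_abs (f : ι → α) (I : Finset ι) :
    ∑ l ∈ I, f l - ∑ l ∈ Iᶜ, f l ≤ ∑ l, |f l| := by
  rw [← sum_add_sum_compl I, sub_eq_add_neg, ← sum_neg_distrib]
  exact add_le_add (sum_le_sum fun l _ => le_abs_self _)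
    (sum_le_sum fun l _ => neg_le_abs _)

lemma sum_filter_nonneg_sub_sum_compl_eq_sum_abs (f : ι → α) :
    ∑ l ∈ univ.filter (0 ≤ f ·), f l - ∑ l ∈ (univ.filter (0 ≤ f ·))ᶜ, f l = ∑ l, |f l| := by
  rw [← sum_add_sum_compl (univ.filter (0 ≤ f ·)), sub_eq_add_neg, ← sum_neg_distrib]
  congr 1 <;> refine sum_congr rfl fun l hl => ?_
  · exact (abs_of_nonneg (mem_filter.1 hl).2).symm
  · exact (abs_of_neg (by simpa using hl)).symm

lemma ciSup_sum_sub_sum_compl_eq_sum_abs (f : ι → α) :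
    ⨆ I : Finset ι, (∑ l ∈ I, f l - ∑ l ∈ Iᶜ, f l) = ∑ l, |f l| :=
  le_antisymm (ciSup_le (sum_sub_sum_compl_le_sum_abs f))
    ((sum_filter_nonneg_sub_sum_compl_eq_sum_abs f).symm.trans_le
      (le_ciSup (Finite.bddAbove_range
        fun I : Finset ι => ∑ l ∈ I, f l - ∑ l ∈ Iᶜ, f l) _))

end Order

lemma ContinuousAt.ciSup_of_finite {ι X L : Type*} [TopologicalSpace X]
    [ConditionallyCompleteLattice L] [TopologicalSpace L] [ContinuousSup L] [Fintype ι]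
    [Nonempty ι] {f : ι → X → L} {x : X} (hf : ∀ i, ContinuousAt (f i) x) :
    ContinuousAt (fun a => ⨆ i, f i a) x := by
  simpa only [← sup'_univ_eq_ciSup] using
    ContinuousAt.finset_sup'_apply univ_nonempty fun i _ => hf i

section Workload

variable {m k : ℕ} (W : Fin m → Fin k → ℝ)

lemma signedColSum_sub (I : Finset (Fin m)) (j1 j2 : Fin k) :
    signedColSum W I j1 - signedColSum W I j2 =
      ∑ l ∈ I, (W l j1 - W l j2) - ∑ l ∈ Iᶜ, (W l j1 - W l j2) := by
  simp only [signedColSum, sum_sub_distrib]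
  ring

lemma ciSup_signedColSum_sub (j1 j2 : Fin k) :
    ⨆ I, (signedColSum W I j1 - signedColSum W I j2) = ∑ l, |W l j1 - W l j2| := by
  simp only [signedColSum_sub]
  exact ciSup_sum_sub_sum_compl_eq_sum_abs _

lemma ciSup_ciSup_sub_ciInf_signedColSum [NeZero k] :
    ⨆ I, ((⨆ j, signedColSum W I j) - ⨅ j, signedColSum W I j) =
      ⨆ j1, ⨆ j2, ∑ l, |W l j1 - W l j2| := by
  simp only [ciSup_sub_ciInf_eq_ciSup_ciSup_sub, ← ciSup_signedColSum_sub]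
  rw [ciSup_comm_of_finite]
  simp only [ciSup_comm_of_finite (fun I j2 => signedColSum W I _ - signedColSum W I j2)]

lemma continuousAt_Bthm_zero (b : ℝ) : ContinuousAt (Bthm W b) 0 := by
  refine ContinuousAt.ciSup_of_finite fun I => continuousAt_const.div (by fun_prop) ?_
  simp [(exp_pos _).ne']

lemma Bthm_zero (b : ℝ) :
    Bthm W b 0 = ⨆ I, exp (((⨆ j, signedColSum W I j) - ⨅ j, signedColSum W I j) / b) := by
  simp only [Bthm, zero_mul, mul_zero, sub_zero, one_mul, zero_add, ← exp_sub]
  congr! 3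
  ring

lemma Bthm_zero_eq_exp_εDP [NeZero k] {b : ℝ} (hb : 0 ≤ b) : Bthm W b 0 = exp (εDP W b) := by
  have hmono : Monotone fun x => exp (x / b) := fun x y hxy =>
    exp_le_exp.2 (div_le_div_of_nonneg_right hxy hb)
  rw [Bthm_zero, εDP, ← ciSup_ciSup_sub_ciInf_signedColSum,
    hmono.map_ciSup_of_continuousAt (by fun_prop) (Finite.bddAbove_range _)]

end Workload

theorem Bthm_tendsto_exp_epsDP_general
    (k m : ℕ) (hk : 0 < k)
    (b : ℝ) (hb : 0 < b) (W : Fin m → Fin k → ℝ) :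
    Tendsto (fun α : ℝ => Bthm W b α)
      (nhdsWithin 0 (Set.Ioc (0 : ℝ) (1 / (k : ℝ))))
      (nhds (Real.exp (εDP W b))) := by
  have : NeZero k := ⟨hk.ne'⟩
  rw [← Bthm_zero_eq_exp_εDP W hb.le]
  exact (continuousAt_Bthm_zero W b).tendsto.mono_left nhdsWithin_le_nhds

/-- As `α → 0⁺` (within `(0, 1/k]`), the context-aware bound `B_thm(α)` converges to
the standard DP guarantee `exp(ε_DP)`. -/
theorem Bthm_tendsto_exp_epsDP
    (k m : ℕ) (hk : 0 < k) (hm : 0 < m)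
    (b : ℝ) (hb : 0 < b) (W : Fin m → Fin k → ℝ) :
    Tendsto (fun α : ℝ => Bthm W b α)
      (nhdsWithin 0 (Set.Ioc (0 : ℝ) (1 / (k : ℝ))))
      (nhds (Real.exp (εDP W b))) :=
  Bthm_tendsto_exp_epsDP_general k m hk b hb W

end
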